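/- arXiv:1103.3361 — 10 statements merged into one kernel-verified Lean document; each statement's English description precedes it below -/
import Mathlib

section
/- Let M be a monoid and a, b ∈ M with a ≠ b, and suppose b = ac = da for some c, d ∈ M (i.e., a ⊑ b in the two-sided divisibility order). Then the set of right inverses of a and the set of right inverses of b are disjoint. -/
/-- If `a ≠ b` and `b = a*c = d*a` for some `c, d`, then the sets of right
inverses of `a` and `b` are disjoint. -/
theorem stmt_0 {M : Type*} [Monoid M] (a b : M) (hne : a ≠ b)
    (c d : M) (hc : b = a * c) (hd : b = d * a) :
    {y : M | a * y = 1} ∩ {y : M | b * y = 1} = ∅ := by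
  ext y
  simp only [Set.mem_inter_iff, Set.mem_setOf_eq, Set.mem_empty_iff_false, iff_false]
  rintro ⟨ha, hb⟩
  apply hne
  have hd1 : d = 1 := by
    calc d = d * (a * y) := by rw [ha, mul_one]
    _ = b * y := by rw [hd, mul_assoc]
    _ = 1 := hb
  rw [hd, hd1, one_mul]
end

section
/- Let M be a left-cancellative monoid that does not contain an infinite ascending chain, i.e., there is no infinite sequence x₁, x₂, … of pairwise distinct elements with xᵢ ⊑ xᵢ₊₁ for all i. Then M is a finite group. -/
/-- A left-cancellative monoid with no infinite ascending chain (an injective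
sequence `x` with `x i ⊑ x (i+1)`, where `a ⊑ b` iff `b = a*c = d*a` for some
`c, d`) is a finite group. -/
theorem stmt_2 {M : Type*} [Monoid M]
    (hcanc : ∀ a b c : M, a * b = a * c → b = c)
    (hchain : ¬ ∃ x : ℕ → M, Function.Injective x ∧
      ∀ i : ℕ, (∃ c, x (i + 1) = x i * c) ∧ (∃ d, x (i + 1) = d * x i)) :
    Finite M ∧ ∀ a : M, ∃ b : M, a * b = 1 ∧ b * a = 1 := by
  have hinv : ∀ a : M, ∃ b : M, a * b = 1 ∧ b * a = 1 := by
    intro a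
    have hni : ¬ Function.Injective (fun i : ℕ => a ^ (i + 1)) := by
      intro hinj
      exact hchain ⟨_, hinj, fun i =>
        ⟨⟨a, by simp [pow_succ]⟩, ⟨a, by simp [pow_succ']⟩⟩⟩
    obtain ⟨i, j, hij, hne⟩ := Function.not_injective_iff.mp hni

    -- WLOG i < j
    have key : ∀ i j : ℕ, i < j → a ^ (i + 1) = a ^ (j + 1) →
        ∃ b : M, a * b = 1 ∧ b * a = 1 := by
      intro i j hlt heq
      have hk : a ^ (j - i) = 1 := by
        have h1 : a ^ (i + 1) * a ^ (j - i) = a ^ (i + 1) * 1 := by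
          rw [mul_one, ← pow_add]
          rw [heq]
          congr 1
          omega
        exact hcanc _ _ _ h1
      refine ⟨a ^ (j - i - 1), ?_, ?_⟩
      · have : a * a ^ (j - i - 1) = a ^ (j - i) := by
          rw [← pow_succ']
          congr 1
          omega
        rw [this, hk]
      · have : a ^ (j - i - 1) * a = a ^ (j - i) := by
          rw [← pow_succ]
          congr 1
          omega
        rw [this, hk]
    rcases lt_or_gt_of_ne hne with h | h
    · exact key i j h hij
    · exact key j i h hij.symm
  refine ⟨?_, hinv⟩
  by_contra hfin
  have : Infinite M := not_finite_iff_infinite.mp hfin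
  have f := Infinite.natEmbedding M
  refine hchain ⟨f, f.injective, fun i => ?_⟩
  obtain ⟨b, hb1, hb2⟩ := hinv (f i)
  exact ⟨⟨b * f (i + 1), by rw [← mul_assoc, hb1, one_mul]⟩,
         ⟨f (i + 1) * b, by rw [mul_assoc, hb2, mul_one]⟩⟩
end

section
/- Let M be a monoid in which R(M), the set of right invertible elements, is finite and forms a group. Then E(M) = R(M), where E(M) = {a ∈ M : ∃ b, c ∈ M, bac = 1}. -/
/-- If `R(M)` is finite and forms a group (every right invertible element has a
two-sided inverse), then `E(M) = {a | ∃ b c, b*a*c = 1}` equals `R(M)`. -/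
theorem stmt_6 {M : Type*} [Monoid M]
    (hfin : {a : M | ∃ b, a * b = 1}.Finite)
    (hgrp : ∀ a : M, (∃ b, a * b = 1) → ∃ b : M, a * b = 1 ∧ b * a = 1) :
    {a : M | ∃ b c, b * a * c = 1} = {a : M | ∃ b, a * b = 1} := by
  ext a
  constructor
  · rintro ⟨b, c, h⟩
    obtain ⟨b', hbb', hb'b⟩ := hgrp b ⟨a * c, by rwa [← mul_assoc]⟩
    have hac : a * c = b' := by
      calc a * c = b' * b * (a * c) := by rw [hb'b, one_mul]
        _ = b' * (b * a * c) := by simp [mul_assoc]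
        _ = b' := by rw [h, mul_one]
    exact ⟨c * b, by rw [← mul_assoc, hac, hb'b]⟩
  · rintro ⟨b, h⟩
    exact ⟨1, b, by simpa using h⟩
end

section
/- Let M be a monoid. R(M) is infinite if and only if L(M) is infinite, where R(M) and L(M) are the sets of right invertible and left invertible elements respectively. -/
lemma pow_mul_pow_eq_one' {M : Type*} [Monoid M] {a b : M} (h : a * b = 1) :
    ∀ n : ℕ, a ^ n * b ^ n = 1 := by
  intro n
  induction n with
  | zero => simp
  | succ n ih =>
    rw [pow_succ a, pow_succ' b, mul_assoc, ← mul_assoc a b, h, one_mul, ih]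

lemma b_pow_inj {M : Type*} [Monoid M] {a b : M} (h : a * b = 1) (h' : b * a ≠ 1) :
    Function.Injective (fun n : ℕ => b ^ n) := by
  have key : ∀ n m : ℕ, n < m → b ^ n = b ^ m → False := by
    intro n m hnm heq
    have h1 : (1 : M) = b ^ (m - n) := by
      calc (1 : M) = a ^ n * b ^ n := (pow_mul_pow_eq_one' h n).symm
        _ = a ^ n * b ^ m := by rw [heq]
        _ = a ^ n * (b ^ n * b ^ (m - n)) := by rw [← pow_add, Nat.add_sub_cancel' hnm.le]
        _ = (a ^ n * b ^ n) * b ^ (m - n) := by rw [mul_assoc]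
        _ = b ^ (m - n) := by rw [pow_mul_pow_eq_one' h n, one_mul]
    have h2 : b * b ^ (m - n - 1) = 1 := by
      rw [← pow_succ']
      have : m - n - 1 + 1 = m - n := by omega
      rw [this, ← h1]
    have ha : a = b ^ (m - n - 1) := by
      calc a = a * (b * b ^ (m - n - 1)) := by rw [h2, mul_one]
        _ = (a * b) * b ^ (m - n - 1) := by rw [mul_assoc]
        _ = b ^ (m - n - 1) := by rw [h, one_mul]
    exact h' (by rw [ha, h2])
  intro n m heq
  simp only at heq
  rcases lt_trichotomy n m with h1 | h1 | h1
  · exact absurd heq (fun he => key n m h1 he)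
  · exact h1
  · exact absurd heq.symm (fun he => key m n h1 he)

lemma a_pow_inj {M : Type*} [Monoid M] {a b : M} (h : a * b = 1) (h' : b * a ≠ 1) :
    Function.Injective (fun n : ℕ => a ^ n) := by
  have key : ∀ n m : ℕ, n < m → a ^ n = a ^ m → False := by
    intro n m hnm heq
    have h1 : (1 : M) = a ^ (m - n) := by
      calc (1 : M) = a ^ n * b ^ n := (pow_mul_pow_eq_one' h n).symm
        _ = a ^ m * b ^ n := by rw [heq]
        _ = (a ^ (m - n) * a ^ n) * b ^ n := by rw [← pow_add, Nat.sub_add_cancel hnm.le]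
        _ = a ^ (m - n) * (a ^ n * b ^ n) := by rw [mul_assoc]
        _ = a ^ (m - n) := by rw [pow_mul_pow_eq_one' h n, mul_one]
    have h2 : a ^ (m - n - 1) * a = 1 := by
      rw [← pow_succ]
      have : m - n - 1 + 1 = m - n := by omega
      rw [this, ← h1]
    have hb : b = a ^ (m - n - 1) := by
      calc b = (a ^ (m - n - 1) * a) * b := by rw [h2, one_mul]
        _ = a ^ (m - n - 1) * (a * b) := by rw [mul_assoc]
        _ = a ^ (m - n - 1) := by rw [h, mul_one]
    exact h' (by rw [hb, h2])
  intro n m heq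
  simp only at heq
  rcases lt_trichotomy n m with h1 | h1 | h1
  · exact absurd heq (fun he => key n m h1 he)
  · exact h1
  · exact absurd heq.symm (fun he => key m n h1 he)

/-- In a monoid, the set of right invertible elements is infinite iff the set
of left invertible elements is infinite. -/
theorem stmt_7 {M : Type*} [Monoid M] :
    {a : M | ∃ b, a * b = 1}.Infinite ↔ {a : M | ∃ b, b * a = 1}.Infinite := by
  by_cases h : ∃ a b : M, a * b = 1 ∧ b * a ≠ 1
  · obtain ⟨a, b, hab, hba⟩ := h
    constructor
    · intro _
      exact Set.infinite_of_injective_forall_mem (b_pow_inj hab hba)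
        (fun n => ⟨a ^ n, pow_mul_pow_eq_one' hab n⟩)
    · intro _
      exact Set.infinite_of_injective_forall_mem (a_pow_inj hab hba)
        (fun n => ⟨b ^ n, pow_mul_pow_eq_one' hab n⟩)
  · push_neg at h
    have : {a : M | ∃ b, a * b = 1} = {a : M | ∃ b, b * a = 1} := by
      ext x
      constructor
      · rintro ⟨b, hb⟩; exact ⟨b, h x b hb⟩
      · rintro ⟨b, hb⟩; exact ⟨b, h b x hb⟩
    rw [this]
end

section
/- Let M be a monoid for which R(M) is infinite. Then there is an infinite subset S ⊆ R(M) such that for all s, t ∈ S with s ≠ t, the sets of right inverses of s and of t are disjoint. -/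
/-- If the set of right invertible elements of a monoid is infinite, then there
is an infinite set `S` of right invertible elements such that distinct elements
of `S` have disjoint sets of right inverses. -/
theorem stmt_8 {M : Type*} [Monoid M]
    (hinf : {a : M | ∃ b, a * b = 1}.Infinite) :
    ∃ S : Set M, S ⊆ {a : M | ∃ b, a * b = 1} ∧ S.Infinite ∧
      ∀ s ∈ S, ∀ t ∈ S, s ≠ t → {y : M | s * y = 1} ∩ {y : M | t * y = 1} = ∅ := by
  by_cases hcomm : ∀ a b : M, a * b = 1 → b * a = 1
  · refine ⟨_, le_refl _, hinf, ?_⟩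
    rintro s ⟨bs, hbs⟩ t ⟨bt, hbt⟩ hst
    ext y
    simp only [Set.mem_inter_iff, Set.mem_setOf_eq, Set.mem_empty_iff_false, iff_false]
    rintro ⟨hs, ht⟩
    refine hst ?_
    calc s = s * (y * t) := by rw [hcomm t y ht, mul_one]
      _ = (s * y) * t := (mul_assoc ..).symm
      _ = t := by rw [hs, one_mul]
  · push_neg at hcomm
    obtain ⟨a, b, hab, hba⟩ := hcomm
    have hpow : ∀ k : ℕ, a ^ k * b ^ k = 1 := by
      intro k; induction k with
      | zero => simp
      | succ n ih =>
        rw [pow_succ', pow_succ, mul_assoc, ← mul_assoc (a ^ n), ih, one_mul, hab]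
    have hne1 : ∀ k : ℕ, 0 < k → a ^ k ≠ 1 := by
      intro k hk h1
      obtain ⟨j, rfl⟩ : ∃ j, k = j + 1 := ⟨k - 1, by omega⟩
      have hb : b = a ^ j := by
        calc b = a ^ (j + 1) * b := by rw [h1, one_mul]
          _ = a ^ j * (a * b) := by rw [pow_succ, mul_assoc]
          _ = a ^ j := by rw [hab, mul_one]
      exact hba (by rw [hb, ← pow_succ, h1])
    have hstep : ∀ m n : ℕ, m < n → ∀ y : M, a ^ (m + 1) * y = 1 →
        a ^ (n + 1) * y = a ^ (n - m) := by
      intro m n hmn y hy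
      have h : a ^ (n + 1) = a ^ (n - m) * a ^ (m + 1) := by
        rw [← pow_add]; congr 1; omega
      rw [h, mul_assoc, hy, mul_one]
    have hinj : Function.Injective (fun n : ℕ => a ^ (n + 1)) := by
      intro m n h
      simp only at h
      by_contra hne
      rcases Nat.lt_or_ge m n with hmn | hge
      · have := hstep m n hmn (b ^ (m + 1)) (hpow (m + 1))
        rw [← h, hpow (m + 1)] at this
        exact hne1 (n - m) (by omega) this.symm
      · have hnm : n < m := by omega
        have := hstep n m hnm (b ^ (n + 1)) (hpow (n + 1))
        rw [h, hpow (n + 1)] at this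
        exact hne1 (m - n) (by omega) this.symm
    refine ⟨Set.range (fun n : ℕ => a ^ (n + 1)), ?_, Set.infinite_range_of_injective hinj, ?_⟩
    · rintro x ⟨n, rfl⟩
      exact ⟨b ^ (n + 1), hpow (n + 1)⟩
    · rintro s ⟨m, rfl⟩ t ⟨n, rfl⟩ hst
      ext y
      simp only [Set.mem_inter_iff, Set.mem_setOf_eq, Set.mem_empty_iff_false, iff_false]
      rintro ⟨hs, ht⟩
      have hmn : m ≠ n := fun h => hst (by rw [h])
      rcases Nat.lt_or_ge m n with h | h
      · have := hstep m n h y hs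
        rw [ht] at this
        exact hne1 (n - m) (by omega) this.symm
      · have hnm : n < m := by omega
        have := hstep n m hnm y ht
        rw [hs] at this
        exact hne1 (m - n) (by omega) this.symm
end

section
/- For each finite group G there is a constant m ∈ ℕ such that for all n ≥ m and all elements g₁,…,gₙ, h₁,…,hₙ ∈ G there exist indices 1 ≤ k < ℓ ≤ n with g_k h_k g_{k+1} h_{k+1} ⋯ g_ℓ h_ℓ = (g_k g_{k+1} ⋯ g_ℓ)(h_k h_{k+1} ⋯ h_ℓ). In fact m = 2(|G|³ + 1) suffices. -/
/-- Splitting a product over `List.range (a + c)`. -/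
lemma range_prod_split {G : Type*} [Group G] (f : ℕ → G) (a c : ℕ) :
    ((List.range (a + c)).map f).prod =
      ((List.range a).map f).prod * ((List.range c).map (fun t => f (a + t))).prod := by
  rw [List.range_add, List.map_append, List.prod_append, List.map_map]
  rfl

/-- For a finite group `G`, with `m = 2*(|G|^3 + 1)`: for all `n ≥ m` and
`g, h : ℕ → G` there are indices `1 ≤ k < ℓ ≤ n` such that the interleaved
product `g_k h_k ⋯ g_ℓ h_ℓ` equals `(g_k ⋯ g_ℓ) * (h_k ⋯ h_ℓ)`. -/
theorem stmt_9 (G : Type*) [Group G] [Fintype G] (n : ℕ)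
    (hn : 2 * (Fintype.card G ^ 3 + 1) ≤ n) (g h : ℕ → G) :
    ∃ k ℓ : ℕ, 1 ≤ k ∧ k < ℓ ∧ ℓ ≤ n ∧
      ((List.range (ℓ + 1 - k)).map (fun i => g (k + i) * h (k + i))).prod =
        ((List.range (ℓ + 1 - k)).map (fun i => g (k + i))).prod *
          ((List.range (ℓ + 1 - k)).map (fun i => h (k + i))).prod := by
  set N := Fintype.card G ^ 3 with hN
  -- prefix products
  set P : ℕ → G := fun t => ((List.range t).map (fun i => g (1 + i))).prod with hP
  set Q : ℕ → G := fun t => ((List.range t).map (fun i => h (1 + i))).prod with hQ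
  set R : ℕ → G := fun t =>
    ((List.range t).map (fun i => g (1 + i) * h (1 + i))).prod with hR
  have hcard : Fintype.card (G × G × G) < Fintype.card (Fin (N + 1)) := by
    simp [Fintype.card_prod, hN, pow_succ, pow_two]
    ring_nf
    omega
  obtain ⟨a, b, hab, heq⟩ := Fintype.exists_ne_map_eq_of_card_lt
    (fun i : Fin (N + 1) => (P (2 * (i : ℕ)), Q (2 * (i : ℕ)), R (2 * (i : ℕ)))) hcard
  -- wlog a < b
  wlog hlt : (a : ℕ) < (b : ℕ) generalizing a b
  · exact this b a hab.symm heq.symm (by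
      rcases lt_or_gt_of_ne (fun hc => hab (Fin.ext hc)) with h' | h'
      · exact absurd h' hlt
      · exact h')
  obtain ⟨hPeq, hQeq, hReq⟩ : P (2 * a) = P (2 * b) ∧ Q (2 * a) = Q (2 * b)
      ∧ R (2 * a) = R (2 * b) := by
    simpa [Prod.ext_iff] using heq
  refine ⟨2 * a + 1, 2 * b, le_add_self, by omega, ?_, ?_⟩
  · have : (b : ℕ) ≤ N := Nat.lt_succ_iff.mp b.isLt
    omega
  · have hsub : 2 * (b : ℕ) + 1 - (2 * a + 1) = 2 * b - 2 * a := by omega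
    have hadd : 2 * (b : ℕ) = 2 * a + (2 * b - 2 * a) := by omega
    -- each shifted product is 1
    have key : ∀ f : ℕ → G,
        ((List.range (2 * (a:ℕ))).map (fun i => f (1 + i))).prod =
          ((List.range (2 * (b:ℕ))).map (fun i => f (1 + i))).prod →
        ((List.range (2 * (b:ℕ) - 2 * a)).map (fun i => f (2 * a + 1 + i))).prod = 1 := by
      intro f hf
      have := range_prod_split (fun i => f (1 + i)) (2 * a) (2 * b - 2 * a)
      rw [← hadd, ← hf] at this
      have h1 : ((List.range (2 * (b:ℕ) - 2 * a)).map
          (fun t => f (1 + (2 * a + t)))).prod = 1 := by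
        nth_rewrite 1 [← mul_one ((List.range (2 * (a:ℕ))).map
          (fun i => f (1 + i))).prod] at this
        exact (mul_left_cancel this).symm
      have hfun : (fun i => f (2 * (a:ℕ) + 1 + i)) = fun t => f (1 + (2 * (a:ℕ) + t)) := by
        funext t; congr 1; ring
      rw [hfun]; exact h1
    rw [hsub, key _ hPeq, key _ hQeq, key (fun i => g i * h i) hReq, mul_one]
end

section
/- Let X be an alphabet (a finite set) and U, V ⊆ X with V ⊆ U. Let r ∈ X*·U (r is nonempty and ends in a letter of U), x ∈ U⁺, y ∈ (X∖U)⁺, and s ∈ X* not starting with a letter of U. Then f_V(rxys) ≤ f_V(ryxs), where f_V(w) is the number of maximal nonempty blocks of letters from V, i.e., the number n in the unique factorization w = y₀x₁y₁⋯xₙyₙ with each xᵢ ∈ V⁺ and each yᵢ (for 0 < i < n) in (X∖V)⁺, y₀, yₙ ∈ (X∖V)*. -/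
/-- `blockCount p w` is the number of maximal nonempty blocks of letters
satisfying `p` in the word `w`. -/
def blockCount {X : Type*} (p : X → Bool) (w : List X) : ℕ :=
  ((w.map p).destutter (· ≠ ·)).count true

/-- Recursive block counter on boolean lists, given the previous letter. -/
def blk : Bool → List Bool → ℕ
  | _, [] => 0
  | prev, b :: t => (if b && !prev then 1 else 0) + blk b t

lemma count_destutter' (l : List Bool) : ∀ a : Bool,
    (List.destutter' (· ≠ ·) a l).count true = (if a then 1 else 0) + blk a l := by
  induction l with
  | nil => intro a; cases a <;> simp [List.destutter', blk]
  | cons b t ih =>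
    intro a
    by_cases h : a = b
    · subst h
      rw [List.destutter'_cons_neg _ (by simp)]
      rw [ih a]
      simp [blk]
    · rw [List.destutter'_cons_pos _ (by simpa using h)]
      rw [List.count_cons, ih b]
      have hb : (b && !a) = b := by
        cases a <;> cases b <;> simp_all
      simp [blk, hb]
      cases a <;> cases b <;> simp_all <;> omega

lemma blockCount_eq_blk {X : Type*} (p : X → Bool) (w : List X) :
    blockCount p w = blk false (w.map p) := by
  unfold blockCount
  cases h : w.map p with
  | nil => simp [List.destutter, blk]
  | cons b t =>
    rw [List.destutter_cons' ]
    rw [count_destutter' t b]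
    cases b <;> simp [blk]

lemma blk_append (l1 : List Bool) : ∀ (prev : Bool) (l2 : List Bool),
    blk prev (l1 ++ l2) = blk prev l1 + blk (l1.getLastD prev) l2 := by
  induction l1 with
  | nil => intro prev l2; simp [blk]
  | cons b t ih =>
    intro prev l2
    simp only [List.cons_append, blk, List.getLastD_cons, List.append_eq, ih]
    omega

lemma blk_all_false (l : List Bool) (h : ∀ b ∈ l, b = false) (prev : Bool) :
    blk prev l = 0 := by
  induction l generalizing prev with
  | nil => rfl
  | cons b t ih =>
    have hb : b = false := h b (by simp)
    subst hb
    simp [blk, ih (fun b hb => h b (by simp [hb])) false]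

lemma getLastD_all_false (l : List Bool) (h : ∀ b ∈ l, b = false) (hne : l ≠ [])
    (d : Bool) : l.getLastD d = false := by
  induction l generalizing d with
  | nil => simp at hne
  | cons b t ih =>
    cases t with
    | nil => simpa using h b (by simp)
    | cons c u =>
      rw [List.getLastD_cons]
      exact ih (fun b hb => h b (by simp [hb])) (by simp) b

lemma blk_le_blk_false (l : List Bool) (c : Bool) : blk c l ≤ blk false l := by
  cases l with
  | nil => simp [blk]
  | cons b t =>
    simp only [blk]
    have : (if b && !c then 1 else 0) ≤ (if b && !false then 1 else 0) := by
      cases b <;> cases c <;> simp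
    omega

lemma blk_head_false (l : List Bool) (h : ∀ b, l.head? = some b → b = false)
    (prev : Bool) : blk prev l = blk false l := by
  cases l with
  | nil => rfl
  | cons b t =>
    have hb : b = false := h b rfl
    subst hb
    simp [blk]

/-- Lemma on block counts: with `V ⊆ U`, if `r` ends in a letter of `U`,
`x ∈ U⁺`, `y ∈ (X∖U)⁺`, and `s` does not start with a letter of `U`, then
the number of `V`-blocks of `rxys` is at most that of `ryxs`. -/
theorem stmt_11 {X : Type*} [Fintype X] (U V : Set X)
    [DecidablePred (· ∈ V)] (hUV : V ⊆ U)
    (r x y s : List X)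
    (hr : ∃ r' : List X, ∃ a ∈ U, r = r' ++ [a])
    (hx : x ≠ [] ∧ ∀ a ∈ x, a ∈ U)
    (hy : y ≠ [] ∧ ∀ a ∈ y, a ∉ U)
    (hs : ∀ a : X, s.head? = some a → a ∉ U) :
    blockCount (fun a => decide (a ∈ V)) (r ++ x ++ y ++ s) ≤
      blockCount (fun a => decide (a ∈ V)) (r ++ y ++ x ++ s) := by
  set p : X → Bool := fun a => decide (a ∈ V) with hp
  rw [blockCount_eq_blk, blockCount_eq_blk]
  rw [List.append_assoc, List.append_assoc, List.append_assoc, List.append_assoc]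
  rw [List.map_append, List.map_append, List.map_append,
      List.map_append, List.map_append, List.map_append]
  set R := r.map p
  set Xb := x.map p
  set Yb := y.map p
  set Sb := s.map p
  -- facts
  have hYfalse : ∀ b ∈ Yb, b = false := by
    intro b hb
    obtain ⟨a, ha, rfl⟩ := List.mem_map.1 hb
    simpa [hp] using fun hv => hy.2 a ha (hUV hv)
  have hYne : Yb ≠ [] := by simpa [Yb] using hy.1
  have hShead : ∀ b, Sb.head? = some b → b = false := by
    intro b hb
    cases s with
    | nil => simp [Sb] at hb
    | cons a t =>
      simp only [Sb, List.map_cons, List.head?_cons, Option.some.injEq] at hb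
      subst hb
      simpa [hp] using fun hv => hs a rfl (hUV hv)
  rw [blk_append R, blk_append Xb, blk_append Yb, blk_append R, blk_append Yb, blk_append Xb]
  rw [blk_all_false Yb hYfalse, blk_all_false Yb hYfalse]
  rw [getLastD_all_false Yb hYfalse hYne, getLastD_all_false Yb hYfalse hYne]
  rw [blk_head_false Sb hShead (Xb.getLastD false)]
  have h1 : blk (R.getLastD false) Xb ≤ blk false Xb := blk_le_blk_false _ _
  omega
end

section
/- Let X be an alphabet and U, V ⊆ X with U ∩ V = ∅. Let r ∈ X*·U, x ∈ U⁺, y ∈ (X∖U)⁺, and s ∈ X* not starting with a letter of U. Then f_V(rxys) ≤ f_V(ryxs), where f_V(w) counts the maximal nonempty blocks of letters from V in w. -/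
/-! A block of `true`s starts wherever the indicator word switches from `false` to `true`,
reading the letter before the word as `false`. Counted this way the block number is additive over
concatenation, each piece being read after the last letter of the piece before it. The letters of
`x` lie outside `V` and so does the last letter of `r`: in both words `x` starts no block, and in
`rxys` it does not change what `y` is read after. The two counts therefore differ only at the start
of `s`, which in `ryxs` is read after a letter outside `V`, where a block can only be gained. -/

def blockStarts : Bool → List Bool → ℕ
  | _, [] => 0
  | prev, b :: l => (if b && !prev then 1 else 0) + blockStarts b l

namespace blockStarts

theorem count_true_destutter' (a : Bool) (l : List Bool) :
    (List.destutter' (· ≠ ·) a l).count true = (if a then 1 else 0) + blockStarts a l := by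
  induction l generalizing a with
  | nil => cases a <;> rfl
  | cons b l ih =>
    by_cases h : a = b
    · subst h
      rw [List.destutter'_cons_neg _ (by simp), ih, blockStarts]
      cases a <;> simp
    · rw [List.destutter'_cons_pos _ h, List.count_cons, ih, blockStarts]
      cases a <;> cases b <;> simp_all [add_comm]

theorem append (prev : Bool) (l₁ l₂ : List Bool) :
    blockStarts prev (l₁ ++ l₂) = blockStarts prev l₁ + blockStarts (l₁.getLastD prev) l₂ := by
  induction l₁ generalizing prev with
  | nil => simp [blockStarts]
  | cons b l ih =>
    rw [List.cons_append, blockStarts, blockStarts, ih, List.getLastD_cons, add_assoc]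

theorem le_blockStarts_false (prev : Bool) (l : List Bool) :
    blockStarts prev l ≤ blockStarts false l := by
  cases prev
  · rfl
  · cases l with
    | nil => rfl
    | cons b l => cases b <;> simp [blockStarts]

theorem eq_zero_of_forall_eq_false {l : List Bool} (h : ∀ b ∈ l, b = false) (prev : Bool) :
    blockStarts prev l = 0 := by
  induction l generalizing prev with
  | nil => rfl
  | cons b l ih =>
    rw [List.forall_mem_cons] at h
    rw [blockStarts, h.1, ih h.2]
    rfl

end blockStarts

theorem blockCount_eq_blockStarts {X : Type*} (p : X → Bool) (w : List X) :
    blockCount p w = blockStarts false (w.map p) := by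
  unfold blockCount
  cases w.map p with
  | nil => rfl
  | cons b l =>
    rw [List.destutter_cons', blockStarts.count_true_destutter', blockStarts]
    cases b <;> simp

theorem blockCount_append_swap_le {X : Type*} (p : X → Bool) {r x : List X} (y s : List X)
    (hr : ∀ a ∈ r.getLast?, p a = false) (hx : x ≠ []) (hxp : ∀ a ∈ x, p a = false) :
    blockCount p (r ++ x ++ y ++ s) ≤ blockCount p (r ++ y ++ x ++ s) := by
  have hxp' : ∀ b ∈ x.map p, b = false := by simpa using hxp
  have hrLast : (r.map p).getLastD false = false := by
    cases h : r.getLast? <;> simp_all [List.getLast?_map]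
  have hxLast : ∀ prev, (x.map p).getLastD prev = false := fun prev => by
    simpa [List.getLast?_map, List.getLast?_eq_some_getLast hx] using hxp _ (List.getLast_mem hx)
  simp only [blockCount_eq_blockStarts, List.map_append, List.append_assoc, blockStarts.append,
    hrLast, hxLast, blockStarts.eq_zero_of_forall_eq_false hxp']
  have := blockStarts.le_blockStarts_false ((y.map p).getLastD false) (s.map p)
  omega

theorem stmt_12_general {X : Type*} (U V : Set X)
    [DecidablePred (· ∈ V)] (hUV : U ∩ V = ∅)
    (r x y s : List X)
    (hr : ∃ r' : List X, ∃ a ∈ U, r = r' ++ [a])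
    (hx : x ≠ [] ∧ ∀ a ∈ x, a ∈ U) :
    blockCount (fun a => decide (a ∈ V)) (r ++ x ++ y ++ s) ≤
      blockCount (fun a => decide (a ∈ V)) (r ++ y ++ x ++ s) := by
  have hU : ∀ a ∈ U, decide (a ∈ V) = false := fun a ha =>
    decide_eq_false fun hv => (Set.eq_empty_iff_forall_notMem.mp hUV) a ⟨ha, hv⟩
  obtain ⟨r', a, ha, rfl⟩ := hr
  exact blockCount_append_swap_le _ y s (by simpa using hU a ha) hx.1 fun b hb => hU b (hx.2 b hb)

/-- Lemma on block counts: with `U ∩ V = ∅`, if `r` ends in a letter of `U`,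
`x ∈ U⁺`, `y ∈ (X∖U)⁺`, and `s` does not start with a letter of `U`, then
the number of `V`-blocks of `rxys` is at most that of `ryxs`. -/
theorem stmt_12 {X : Type*} [Fintype X] (U V : Set X)
    [DecidablePred (· ∈ V)] (hUV : U ∩ V = ∅)
    (r x y s : List X)
    (hr : ∃ r' : List X, ∃ a ∈ U, r = r' ++ [a])
    (hx : x ≠ [] ∧ ∀ a ∈ x, a ∈ U)
    (hy : y ≠ [] ∧ ∀ a ∈ y, a ∉ U)
    (hs : ∀ a : X, s.head? = some a → a ∉ U) :
    blockCount (fun a => decide (a ∈ V)) (r ++ x ++ y ++ s) ≤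
      blockCount (fun a => decide (a ∈ V)) (r ++ y ++ x ++ s) :=
  stmt_12_general U V hUV r x y s hr hx
end

section
/- Let G be a finite group. Then there is a constant m such that for every finite tree (T, ≤) with a valence map φ: T → G, every element v ∈ G which is the value of some linear extension of ≤ is also the value of a linear extension of excursiveness at most m. Here the value of a linear extension listing the nodes as t₁ ≺ ⋯ ≺ tₙ is φ(t₁)⋯φ(tₙ), and the excursiveness is the maximum over all nodes t of the number of maximal contiguous blocks in t₁⋯tₙ consisting of nodes ≥ t. -/
/-- A listing of all elements of a finite poset compatible with the order. -/
def IsLinearExtension {T : Type*} [PartialOrder T] (w : List T) : Prop :=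
  w.Nodup ∧ (∀ t : T, t ∈ w) ∧ w.Pairwise (fun a b => ¬ b ≤ a)

/-!
Fix a node `t` and call the letters of `U_t` inside. If `t` has more than `|G|^3 + 1` blocks,
then two entries into a block of `t`, at prefixes `u` and `u ++ c`, carry the same triple
(product of the outside letters, product of the inside letters, product of all letters).
The three products over `c` are then trivial, so moving the inside letters of `c` to its end
keeps the value; it keeps a linear extension because `U_t` is an up-set, and it merges the
blocks of `t` met in `c` with the block that follows. Since `c` starts inside and ends outside,
and `U_s` is either contained in `U_t` or disjoint from it unless `s < t`, no node other than
the ancestors of `t` gets more blocks. Bounding the nodes from the leaves down therefore never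
spoils a node already treated.
-/

/-- The number of `false → true` steps in `b :: l`. -/
def risesFrom : Bool → List Bool → ℕ
  | _, [] => 0
  | b, a :: l => (!b && a).toNat + risesFrom a l

@[simp] lemma risesFrom_nil (b : Bool) : risesFrom b [] = 0 := rfl

@[simp] lemma risesFrom_cons (b a : Bool) (l : List Bool) :
    risesFrom b (a :: l) = (!b && a).toNat + risesFrom a l := rfl

lemma risesFrom_append (b : Bool) (l₁ l₂ : List Bool) :
    risesFrom b (l₁ ++ l₂) = risesFrom b l₁ + risesFrom (l₁.getLastD b) l₂ := by
  induction l₁ generalizing b with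
  | nil => simp
  | cons a l ih =>
    rw [List.cons_append, risesFrom_cons, risesFrom_cons, ih, List.getLastD_cons, Nat.add_assoc]

lemma risesFrom_append_of_forall_eq {b : Bool} {l₁ : List Bool} (h : ∀ a ∈ l₁, a = b)
    (l₂ : List Bool) :
    risesFrom b (l₁ ++ l₂) = risesFrom b l₂ := by
  induction l₁ with
  | nil => rfl
  | cons a l ih =>
    obtain rfl := h a List.mem_cons_self
    simpa using ih fun x hx => h x (List.mem_cons_of_mem _ hx)

lemma risesFrom_le_false (b : Bool) (l : List Bool) : risesFrom b l ≤ risesFrom false l := by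
  cases l <;> cases b <;> simp

lemma risesFrom_false_le_succ_true (l : List Bool) :
    risesFrom false l ≤ risesFrom true l + 1 := by
  rcases l with _ | ⟨_ | _, l⟩ <;> simp [Nat.add_comm]

lemma count_destutter'_eq_risesFrom (a : Bool) (l : List Bool) :
    (l.destutter' (· ≠ ·) a).count true = a.toNat + risesFrom a l := by
  induction l generalizing a with
  | nil => cases a <;> simp
  | cons b l ih =>
    rw [List.destutter'_cons]
    by_cases hab : a = b
    · subst hab
      simp [ih]
    · rw [if_pos hab, List.count_cons, ih]
      cases a <;> cases b <;> simp_all [Nat.add_comm]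

lemma blockCount_eq_risesFrom {X : Type*} (p : X → Bool) (w : List X) :
    blockCount p w = risesFrom false (w.map p) := by
  cases w with
  | nil => rfl
  | cons x w =>
    rw [blockCount, List.map_cons, List.destutter_cons', count_destutter'_eq_risesFrom]
    cases p x <;> simp

section Words

variable {X : Type*}

lemma risesFrom_map_filter_le (q Q : X → Bool) {c : List X} (h : ∀ x ∈ c, q x → Q x)
    (b : Bool) : risesFrom b ((c.filter Q).map q) ≤ risesFrom b (c.map q) := by
  induction c generalizing b with
  | nil => simp
  | cons x c ih =>
    have ih' := ih (fun y hy => h y (List.mem_cons_of_mem _ hy))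
    by_cases hQ : Q x
    · simpa [List.filter_cons_of_pos hQ] using ih' (q x)
    · have hq : q x = false := by
        simpa using mt (h x List.mem_cons_self) hQ
      rw [List.filter_cons_of_neg hQ, List.map_cons, hq, risesFrom_cons]
      simpa using (risesFrom_le_false b _).trans (ih' false)

def IsBlockEntry (p : X → Bool) (u v : List X) : Prop :=
  (u.map p).getLast? = some false ∧ (v.map p).head? = some true

lemma exists_finset_isBlockEntry (p : X → Bool) (w : List X) :
    ∃ S : Finset ℕ, (∀ k ∈ S, IsBlockEntry p (w.take k) (w.drop k)) ∧
      risesFrom true (w.map p) ≤ S.card := by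
  induction w with
  | nil => exact ⟨∅, by simp, by simp⟩
  | cons a w ih =>
    obtain ⟨S, hS, hcard⟩ := ih
    have hshift :
        ∀ k ∈ S.image Nat.succ, IsBlockEntry p ((a :: w).take k) ((a :: w).drop k) := by
      simp only [Finset.mem_image]
      rintro _ ⟨k, hk, rfl⟩
      obtain ⟨hu, hv⟩ := hS k hk
      exact ⟨by simp_all [List.getLast?_cons], by simpa using hv⟩
    have hcard' : (S.image Nat.succ).card = S.card :=
      Finset.card_image_of_injective _ Nat.succ_injective
    by_cases hentry : p a = false ∧ (w.map p).head? = some true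
    · have h1 : 1 ∉ S.image Nat.succ := by
        simpa using fun h0 => by simpa using (hS 0 h0).1
      refine ⟨insert 1 (S.image Nat.succ), ?_, ?_⟩
      · simp only [Finset.forall_mem_insert]
        exact ⟨⟨by simp [hentry.1], by simpa using hentry.2⟩, hshift⟩
      · rw [Finset.card_insert_of_notMem h1, hcard', List.map_cons, hentry.1,
          risesFrom_cons]
        simpa using (risesFrom_false_le_succ_true _).trans (Nat.succ_le_succ hcard)
    · refine ⟨S.image Nat.succ, hshift, ?_⟩
      rw [hcard', List.map_cons, risesFrom_cons]
      refine le_trans (le_of_eq ?_) hcard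
      cases hpa : p a
      · cases hw : w.map p with
        | nil => rfl
        | cons x l => cases x <;> simp_all
      · simp

def IsBlockChunk (p : X → Bool) (u c v : List X) : Prop :=
  c ≠ [] ∧ IsBlockEntry p u (c ++ v) ∧ IsBlockEntry p (u ++ c) v

lemma exists_chunk {Y : Type*} [Fintype Y] (F : List X → Y) (p : X → Bool) (w : List X)
    (h : Fintype.card Y + 1 < blockCount p w) :
    ∃ u c v, w = u ++ c ++ v ∧ IsBlockChunk p u c v ∧ F u = F (u ++ c) := by
  obtain ⟨S, hS, hcard⟩ := exists_finset_isBlockEntry p w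
  have hlt : (Finset.univ : Finset Y).card < S.card := by
    have := risesFrom_false_le_succ_true (w.map p)
    rw [blockCount_eq_risesFrom] at h
    rw [Finset.card_univ]
    omega
  obtain ⟨k, hk, k', hk', hne, hF⟩ := Finset.exists_ne_map_eq_of_card_lt_of_maps_to hlt
    (f := fun k => F (w.take k)) fun _ _ => Finset.mem_coe.2 (Finset.mem_univ _)
  wlog hkk' : k < k' generalizing k k'
  · exact this k' hk' k hk hne.symm hF.symm (by omega)
  have htake : w.take k ++ (w.drop k).take (k' - k) = w.take k' := by
    rw [← List.take_add, Nat.add_sub_cancel' hkk'.le]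
  have hdrop : (w.drop k).take (k' - k) ++ w.drop k' = w.drop k := by
    rw [← Nat.add_sub_cancel' hkk'.le, ← List.drop_drop, Nat.add_sub_cancel_left,
      List.take_append_drop]
  refine ⟨w.take k, (w.drop k).take (k' - k), w.drop k', ?_, ⟨?_, ?_, ?_⟩, ?_⟩
  · rw [htake, List.take_append_drop]
  · have hv := (hS k hk).2
    rw [Ne, List.take_eq_nil_iff, not_or]
    exact ⟨by omega, by rintro h0; simp [h0] at hv⟩
  · rw [hdrop]; exact hS k hk
  · rw [htake]; exact hS k' hk'
  · rw [htake]; exact hF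

def pushToEnd (p : X → Bool) (c : List X) : List X :=
  c.filter (fun x => !p x) ++ c.filter p

lemma perm_pushToEnd (p : X → Bool) (c : List X) : (pushToEnd p c).Perm c :=
  List.perm_append_comm.trans (List.filter_append_perm p c)

lemma getLastD_map_eq_false {p q : X → Bool} (hqp : ∀ x, q x → p x) {l : List X}
    (h : (l.map p).getLast? = some false) (b : Bool) : (l.map q).getLastD b = false := by
  rw [List.getLast?_map, Option.map_eq_some_iff] at h
  obtain ⟨y, hy, hpy⟩ := h
  rw [List.getLastD_eq_getLast?, List.getLast?_map, hy]
  simpa using mt (hqp y) (by simp [hpy])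

namespace IsBlockChunk

variable {p : X → Bool} {u c v : List X}

lemma getLast?_map (h : IsBlockChunk p u c v) : (c.map p).getLast? = some false := by
  have := h.2.2.1
  rwa [List.map_append, List.getLast?_append_of_ne_nil _ (by simpa using h.1)] at this

lemma exists_cons (h : IsBlockChunk p u c v) : ∃ x c', c = x :: c' ∧ p x := by
  obtain ⟨x, c', rfl⟩ := List.exists_cons_of_ne_nil h.1
  exact ⟨x, c', rfl, by simpa using h.2.1.2⟩

lemma exists_cons_right (h : IsBlockChunk p u c v) : ∃ z v', v = z :: v' ∧ p z := by
  have hv := h.2.2.2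
  cases v with
  | nil => simp at hv
  | cons z v' => exact ⟨z, v', rfl, by simpa using hv⟩

end IsBlockChunk

lemma blockCount_pushToEnd_lt {p : X → Bool} {u c v : List X} (h : IsBlockChunk p u c v) :
    blockCount p (u ++ pushToEnd p c ++ v) < blockCount p (u ++ c ++ v) := by
  have hc := h.getLast?_map
  obtain ⟨x, c', rfl, hx⟩ := h.exists_cons
  obtain ⟨z, v', rfl, hz⟩ := h.exists_cons_right
  simp only [blockCount_eq_risesFrom, List.map_append, List.append_assoc]
  rw [risesFrom_append _ (u.map p), risesFrom_append _ (u.map p),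
    getLastD_map_eq_false (fun _ => id) h.2.1.1]
  refine Nat.add_lt_add_left ?_ _
  have hafter : risesFrom false ((pushToEnd p (x :: c')).map p ++ (z :: v').map p) =
      1 + risesFrom true (v'.map p) := by
    rw [pushToEnd, List.filter_cons_of_pos hx, List.map_append, List.append_assoc,
      risesFrom_append_of_forall_eq (by simp)]
    simp only [List.map_cons, hx, hz, List.cons_append, risesFrom_cons]
    rw [risesFrom_append_of_forall_eq (by simp), risesFrom_cons]
    simp
  have hbefore : 2 + risesFrom true (v'.map p) ≤
      risesFrom false ((x :: c').map p ++ (z :: v').map p) := by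
    rw [risesFrom_append, getLastD_map_eq_false (fun _ => id) hc]
    simp [hx, hz]
    omega
  omega

lemma blockCount_pushToEnd_le_of_imp {p q : X → Bool} (hqp : ∀ x, q x → p x)
    {u c v : List X} (h : IsBlockChunk p u c v) :
    blockCount q (u ++ pushToEnd p c ++ v) ≤ blockCount q (u ++ c ++ v) := by
  simp only [blockCount_eq_risesFrom, List.map_append, List.append_assoc]
  rw [risesFrom_append _ (u.map q), risesFrom_append _ (u.map q),
    getLastD_map_eq_false hqp h.2.1.1]
  refine Nat.add_le_add_left ?_ _
  rw [pushToEnd, List.map_append, List.append_assoc,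
    risesFrom_append_of_forall_eq (by simpa using fun y _ => mt (hqp y)), risesFrom_append,
    risesFrom_append, getLastD_map_eq_false hqp h.getLast?_map]
  exact Nat.add_le_add (risesFrom_map_filter_le q p (fun y _ => hqp y) false)
    (risesFrom_le_false _ _)

lemma blockCount_pushToEnd_le_of_disjoint {p q : X → Bool} (hqp : ∀ x, q x → p x = false)
    {u c v : List X} (h : IsBlockChunk p u c v) :
    blockCount q (u ++ pushToEnd p c ++ v) ≤ blockCount q (u ++ c ++ v) := by
  obtain ⟨z, v', rfl, hz⟩ := h.exists_cons_right
  have hqz : q z = false := by simpa using mt (hqp z) (by simp [hz])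
  simp only [blockCount_eq_risesFrom, List.map_append, List.append_assoc]
  rw [risesFrom_append _ (u.map q), risesFrom_append _ (u.map q)]
  refine Nat.add_le_add_left ?_ _
  rw [pushToEnd, List.map_append, List.append_assoc, risesFrom_append _ (List.map q _),
    risesFrom_append _ (c.map q)]
  refine Nat.add_le_add (risesFrom_map_filter_le q _ (fun y _ hy => by simp [hqp y hy]) _) ?_
  refine (risesFrom_le_false _ _).trans ?_
  rw [risesFrom_append_of_forall_eq
    (by simpa using fun y _ hpy => by simpa [hpy] using mt (hqp y))]
  simp [hqz]

def filterProds {G : Type*} [Monoid G] (φ : X → G) (p : X → Bool) (l : List X) : G × G × G :=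
  (((l.filter (fun x => !p x)).map φ).prod, ((l.filter p).map φ).prod, (l.map φ).prod)

lemma prod_map_pushToEnd {G : Type*} [Group G] {φ : X → G} {p : X → Bool} {u c : List X}
    (h : filterProds φ p u = filterProds φ p (u ++ c)) :
    ((pushToEnd p c).map φ).prod = (c.map φ).prod := by
  simp only [filterProds, List.filter_append, List.map_append, List.prod_append, Prod.mk.injEq,
    left_eq_mul] at h
  simp [pushToEnd, h]

lemma List.Pairwise.pushToEnd [Preorder X] {p : X → Bool} (hp : Monotone p) {c : List X}
    (hc : c.Pairwise (fun a b => ¬ b ≤ a)) :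
    (pushToEnd p c).Pairwise (fun a b => ¬ b ≤ a) := by
  refine List.pairwise_append.2 ⟨hc.filter _, hc.filter _, fun x hx z hz hzx => ?_⟩
  simp only [List.mem_filter, Bool.not_eq_true'] at hx hz
  exact absurd (hp hzx) (by simp [hz.2, hx.2])

lemma IsLinearExtension.perm_middle {T : Type*} [PartialOrder T] {u c c' v : List T}
    (hw : IsLinearExtension (u ++ c ++ v)) (hperm : c'.Perm c)
    (hc' : c'.Pairwise (fun a b => ¬ b ≤ a)) : IsLinearExtension (u ++ c' ++ v) := by
  have hperm' : (u ++ c' ++ v).Perm (u ++ c ++ v) := (hperm.append_left u).append_right v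
  obtain ⟨hnd, hmem, hpw⟩ := hw
  refine ⟨hperm'.nodup_iff.2 hnd, fun t => hperm'.mem_iff.2 (hmem t), ?_⟩
  simp only [List.pairwise_append, List.mem_append, hperm.mem_iff] at hpw ⊢
  tauto

end Words

section Tree

variable {T : Type*} [PartialOrder T]

lemma le_or_forall_not_le_of_not_lt (hchain : ∀ x : T, IsChain (· ≤ ·) {y | y ≤ x})
    {s t : T} (hst : ¬ s < t) : t ≤ s ∨ ∀ x, s ≤ x → ¬ t ≤ x := by
  refine or_iff_not_imp_left.2 fun hts x hsx htx => ?_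
  rcases (hchain x).total hsx htx with h | h
  · exact hst (h.lt_of_not_ge hts)
  · exact hts h

variable [DecidableRel (α := T) (· ≤ ·)]

/-- The length of the valence sequence of `t` in the evaluation `w`. -/
def excursions (w : List T) (t : T) : ℕ :=
  blockCount (fun u => decide (t ≤ u)) w

variable {G : Type*} [Group G] [Fintype G]

theorem exists_excursions_lt (hchain : ∀ x : T, IsChain (· ≤ ·) {y | y ≤ x}) (φ : T → G)
    {w : List T} (hw : IsLinearExtension w) {t : T}
    (ht : Fintype.card (G × G × G) + 1 < excursions w t) :
    ∃ w', IsLinearExtension w' ∧ (w'.map φ).prod = (w.map φ).prod ∧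
      excursions w' t < excursions w t ∧
      ∀ s, ¬ s < t → excursions w' s ≤ excursions w s := by
  set p : T → Bool := fun u => decide (t ≤ u)
  have hp : Monotone p := fun a b hab => Bool.le_iff_imp.2 fun ha => by
    simpa [p] using (of_decide_eq_true ha).trans hab
  obtain ⟨u, c, v, rfl, hchunk, hprods⟩ := exists_chunk (filterProds φ p) p w ht
  have hc : c.Pairwise (fun a b => ¬ b ≤ a) := hw.2.2.sublist (List.infix_append u c v).sublist
  refine ⟨u ++ pushToEnd p c ++ v, hw.perm_middle (perm_pushToEnd p c) (hc.pushToEnd hp), ?_,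
    blockCount_pushToEnd_lt hchunk, fun s hs => ?_⟩
  · simp only [List.map_append, List.prod_append, prod_map_pushToEnd hprods]
  rcases le_or_forall_not_le_of_not_lt hchain hs with hts | hdisj
  · exact blockCount_pushToEnd_le_of_imp
      (fun x hx => decide_eq_true (hts.trans (of_decide_eq_true hx))) hchunk
  · exact blockCount_pushToEnd_le_of_disjoint
      (fun x hx => decide_eq_false (hdisj x (of_decide_eq_true hx))) hchunk

theorem exists_excursions_le (hchain : ∀ x : T, IsChain (· ≤ ·) {y | y ≤ x}) (φ : T → G)
    (t : T) {w : List T} (hw : IsLinearExtension w) :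
    ∃ w', IsLinearExtension w' ∧ (w'.map φ).prod = (w.map φ).prod ∧
      excursions w' t ≤ Fintype.card (G × G × G) + 1 ∧
      ∀ s, ¬ s < t → excursions w' s ≤ excursions w s := by
  induction hn : excursions w t using Nat.strong_induction_on generalizing w with
  | _ n ih =>
  by_cases ht : excursions w t ≤ Fintype.card (G × G × G) + 1
  · exact ⟨w, hw, rfl, ht, fun _ _ => le_rfl⟩
  obtain ⟨w₁, hw₁, hprod₁, hlt₁, hle₁⟩ :=
    exists_excursions_lt hchain φ hw (not_le.1 ht)
  obtain ⟨w', hw', hprod', ht', hle'⟩ := ih _ (hn ▸ hlt₁) hw₁ rfl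
  exact ⟨w', hw', hprod'.trans hprod₁, ht', fun s hs => (hle' s hs).trans (hle₁ s hs)⟩

theorem exists_forall_excursions_le (hchain : ∀ x : T, IsChain (· ≤ ·) {y | y ≤ x})
    (φ : T → G) (R : Finset T) (hR : IsLowerSet (R : Set T)) {w : List T}
    (hw : IsLinearExtension w)
    (hgood : ∀ s ∉ R, excursions w s ≤ Fintype.card (G × G × G) + 1) :
    ∃ w', IsLinearExtension w' ∧ (w'.map φ).prod = (w.map φ).prod ∧
      ∀ s, excursions w' s ≤ Fintype.card (G × G × G) + 1 := by
  classical
  induction R using Finset.strongInduction generalizing w with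
  | H R ih =>
  rcases R.eq_empty_or_nonempty with rfl | hne
  · exact ⟨w, hw, rfl, fun s => hgood s (Finset.notMem_empty s)⟩
  obtain ⟨t, htR, htmax⟩ := Finset.exists_maximal hne
  obtain ⟨w₁, hw₁, hprod₁, ht₁, hle₁⟩ := exists_excursions_le hchain φ t hw
  have hR' : IsLowerSet (R.erase t : Set T) := by
    rw [Finset.coe_erase]
    exact hR.erase fun b hb htb => le_antisymm (htmax hb htb) htb
  have hgood₁ : ∀ s ∉ R.erase t, excursions w₁ s ≤ Fintype.card (G × G × G) + 1 := by
    intro s hs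
    rw [Finset.mem_erase, not_and_or, not_not] at hs
    rcases hs with rfl | hs
    · exact ht₁
    · exact (hle₁ s fun hst => hs (hR hst.le htR)).trans (hgood s hs)
  obtain ⟨w', hw', hprod', hgood'⟩ := ih _ (Finset.erase_ssubset htR) hR' hw₁ hgood₁
  exact ⟨w', hw', hprod'.trans hprod₁, hgood'⟩

end Tree

/-- For each finite group `G` there is a constant `m` such that for every
finite tree `(T, ≤)` (a finite poset with a least element whose principal
down-sets are chains) with valence map `φ : T → G`, every value attained by
some linear extension is attained by one of excursiveness at most `m`. -/
theorem stmt_15 (G : Type*) [Group G] [Fintype G] :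
    ∃ m : ℕ, ∀ (T : Type) [Fintype T] [PartialOrder T]
      [DecidableRel (α := T) (· ≤ ·)],
      (∃ r : T, ∀ t : T, r ≤ t) →
      (∀ t : T, IsChain (· ≤ ·) {t' : T | t' ≤ t}) →
      ∀ (φ : T → G) (v : G),
        (∃ w : List T, IsLinearExtension w ∧ (w.map φ).prod = v) →
        ∃ w : List T, IsLinearExtension w ∧ (w.map φ).prod = v ∧
          ∀ t : T, blockCount (fun u => decide (t ≤ u)) w ≤ m := by
  refine ⟨Fintype.card (G × G × G) + 1, fun T _ _ _ _ hchain φ v ⟨w, hw, hv⟩ => ?_⟩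
  obtain ⟨w', hw', hprod, hgood⟩ := exists_forall_excursions_le hchain φ Finset.univ
    (by simpa using isLowerSet_univ) hw (by simp)
  exact ⟨w', hw', hprod.trans hv, hgood⟩
end

section
/- Let M be a monoid such that E(N) = {a ∈ N : ∃ b, c ∈ N, bac = 1} is finite for every finitely generated submonoid N of M. Then every language accepted by a valence automaton over M is regular. -/
structure ValenceAutomaton (X M : Type*) [Monoid M] where
  n : ℕ
  edges : List (Fin n × (List X × M) × Fin n)
  q0 : Fin n
  F : Finset (Fin n)

def ValenceAutomaton.Step {X M : Type*} [Monoid M] (A : ValenceAutomaton X M) :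
    (Fin A.n × List X × M) → (Fin A.n × List X × M) → Prop :=
  fun p q => ∃ e ∈ A.edges, e.1 = p.1 ∧ e.2.2 = q.1 ∧
    q.2.1 = p.2.1 ++ e.2.1.1 ∧ q.2.2 = p.2.2 * e.2.1.2

def ValenceAutomaton.accepts {X M : Type*} [Monoid M]
    (A : ValenceAutomaton X M) : Language X :=
  { w | ∃ q ∈ A.F, Relation.ReflTransGen A.Step (A.q0, ([], 1)) (q, (w, 1)) }

namespace ValenceProof

variable {M : Type} [Monoid M] {X : Type}

/-- The generators: monoid labels of edges. -/
noncomputable def S (A : ValenceAutomaton X M) : Finset M :=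
  @List.toFinset M (Classical.decEq M) (A.edges.map fun e => e.2.1.2)

/-- The finite set E(N). -/
def Eset (A : ValenceAutomaton X M) : Set M :=
  {a : M | a ∈ Submonoid.closure ((S A : Set M)) ∧
    ∃ b ∈ Submonoid.closure ((S A : Set M)),
    ∃ c ∈ Submonoid.closure ((S A : Set M)), b * a * c = 1}

lemma one_mem_Eset (A : ValenceAutomaton X M) : (1 : M) ∈ Eset A :=
  ⟨one_mem _, 1, one_mem _, 1, one_mem _, by simp⟩

lemma label_mem_closure {A : ValenceAutomaton X M} {e} (he : e ∈ A.edges) :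
    e.2.1.2 ∈ Submonoid.closure ((S A : Set M)) := by
  apply Submonoid.subset_closure
  simp [S]
  exact ⟨e.1, e.2.1.1, e.2.2, by simpa using he⟩

/-- Suffixes of edge words (plus the empty word). -/
def SufSet (A : ValenceAutomaton X M) : Set (List X) :=
  {s | s = [] ∨ ∃ e ∈ A.edges, s <:+ e.2.1.1}

lemma nil_mem_SufSet (A : ValenceAutomaton X M) : ([] : List X) ∈ SufSet A := Or.inl rfl

lemma tail_mem_SufSet {A : ValenceAutomaton X M} {a : X} {s : List X}
    (h : a :: s ∈ SufSet A) : s ∈ SufSet A := by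
  rcases h with h | ⟨e, he, hs⟩
  · simp at h
  · exact Or.inr ⟨e, he, (List.suffix_cons a s).trans hs⟩

lemma word_mem_SufSet {A : ValenceAutomaton X M} {e} (he : e ∈ A.edges) :
    e.2.1.1 ∈ SufSet A := Or.inr ⟨e, he, List.suffix_rfl⟩

lemma sufSet_finite (A : ValenceAutomaton X M) : (SufSet A).Finite := by
  have hsub : SufSet A ⊆ insert [] (⋃ e ∈ {e | e ∈ A.edges}, {s | s <:+ e.2.1.1}) := by
    rintro s (rfl | ⟨e, he, hs⟩)
    · exact Set.mem_insert _ _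
    · exact Set.mem_insert_of_mem _ (Set.mem_biUnion he hs)
  refine Set.Finite.subset (Set.Finite.insert _ ?_) hsub
  refine Set.Finite.biUnion (A.edges.finite_toSet) ?_
  intro e _
  have : {s | s <:+ e.2.1.1} ⊆ {s | s ∈ e.2.1.1.tails} := by
    intro s hs; simpa [List.mem_tails] using hs
  exact (e.2.1.1.tails.finite_toSet).subset this

/-- Runs of the valence automaton, as an inductive relation. -/
inductive Trace (A : ValenceAutomaton X M) : Fin A.n → M → List X → Fin A.n → M → Prop
  | refl (p m) : Trace A p m [] p m
  | head {p : Fin A.n} {m : M} {w q mf} (e) (he : e ∈ A.edges) (hp : e.1 = p)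
      (h : Trace A e.2.2 (m * e.2.1.2) w q mf) : Trace A p m (e.2.1.1 ++ w) q mf

lemma Trace.snoc {A : ValenceAutomaton X M} {p m w q mq}
    (h : Trace A p m w q mq) :
    ∀ e ∈ A.edges, e.1 = q → Trace A p m (w ++ e.2.1.1) e.2.2 (mq * e.2.1.2) := by
  induction h with
  | refl p m =>
    intro e he hq
    have := Trace.head (A := A) e he hq (Trace.refl e.2.2 (m * e.2.1.2))
    simpa using this
  | head e' he' hp' h ih =>
    intro e he hq
    rw [List.append_assoc]
    exact Trace.head e' he' hp' (ih e he hq)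

lemma trace_mem_closure {A : ValenceAutomaton X M} {p m w q mf}
    (h : Trace A p m w q mf) (hm : m ∈ Submonoid.closure ((S A : Set M))) :
    mf ∈ Submonoid.closure ((S A : Set M)) := by
  induction h with
  | refl => exact hm
  | head e he hp h ih => exact ih (mul_mem hm (label_mem_closure he))

lemma trace_inv {A : ValenceAutomaton X M} {p m w q mf}
    (h : Trace A p m w q mf) (hmf : mf = 1) :
    ∃ c ∈ Submonoid.closure ((S A : Set M)), m * c = 1 := by
  induction h with
  | refl => exact ⟨1, one_mem _, by simp [hmf]⟩
  | head e he hp h ih =>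
    obtain ⟨c, hc, hmc⟩ := ih hmf
    exact ⟨e.2.1.2 * c, mul_mem (label_mem_closure he) hc, by rw [← mul_assoc]; exact hmc⟩

/-- ReflTransGen Step → Trace. -/
lemma rtg_to_trace {A : ValenceAutomaton X M} {b : Fin A.n × List X × M} :
    ∀ {a : Fin A.n × List X × M}, Relation.ReflTransGen A.Step a b →
      ∃ w, b.2.1 = a.2.1 ++ w ∧ Trace A a.1 a.2.2 w b.1 b.2.2 := by
  intro a h
  induction h using Relation.ReflTransGen.head_induction_on with
  | refl => exact ⟨[], by simp, Trace.refl _ _⟩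
  | head hstep _ ih =>
    rename_i x y _
    obtain ⟨e, he, h1, h2, h3, h4⟩ := hstep
    obtain ⟨w, hw, ht⟩ := ih
    refine ⟨e.2.1.1 ++ w, by simp [hw, h3], ?_⟩
    apply Trace.head e he h1
    rw [h4] at ht; rw [← h2] at ht; exact ht

lemma trace_to_rtg {A : ValenceAutomaton X M} {p m w q mf}
    (h : Trace A p m w q mf) :
    ∀ w1, Relation.ReflTransGen A.Step (p, (w1, m)) (q, (w1 ++ w, mf)) := by
  induction h with
  | refl p m => intro w1; simpa using Relation.ReflTransGen.refl
  | head e he hp h ih =>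
    rename_i p' m' w' q' mf'
    intro w1
    refine Relation.ReflTransGen.head
      (b := (e.2.2, (w1 ++ e.2.1.1, m' * e.2.1.2))) ⟨e, he, hp, rfl, rfl, rfl⟩ ?_
    have := ih (w1 ++ e.2.1.1)
    simpa [List.append_assoc] using this

lemma accepts_iff_trace {A : ValenceAutomaton X M} {w : List X} :
    w ∈ A.accepts ↔ ∃ q ∈ A.F, Trace A A.q0 1 w q 1 := by
  constructor
  · rintro ⟨q, hq, h⟩
    obtain ⟨w', hw', ht⟩ := rtg_to_trace h
    simp only at hw' ht
    refine ⟨q, hq, ?_⟩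
    rw [hw']; simpa using ht
  · rintro ⟨q, hq, h⟩
    exact ⟨q, hq, by simpa using trace_to_rtg h []⟩

/-- configurations of the NFA. -/
def Conf (A : ValenceAutomaton X M) : Type := Fin A.n × ↥(Eset A) × ↥(SufSet A)

def init (A : ValenceAutomaton X M) : Conf A :=
  (A.q0, ⟨1, one_mem_Eset A⟩, ⟨[], nil_mem_SufSet A⟩)

/-- ε-step: commit to an edge. -/
def EStep (A : ValenceAutomaton X M) (c c' : Conf A) : Prop :=
  (c.2.2 : List X) = [] ∧ ∃ e ∈ A.edges, e.1 = c.1 ∧ c'.1 = e.2.2 ∧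
    (c'.2.1 : M) = (c.2.1 : M) * e.2.1.2 ∧ (c'.2.2 : List X) = e.2.1.1

/-- letter step: consume one pending letter. -/
def AStep (A : ValenceAutomaton X M) (a : X) (c c' : Conf A) : Prop :=
  c'.1 = c.1 ∧ (c'.2.1 : M) = (c.2.1 : M) ∧ (c.2.2 : List X) = a :: (c'.2.2 : List X)

def nfa (A : ValenceAutomaton X M) : NFA X (Conf A) where
  step c a := {c' | ∃ c1, AStep A a c c1 ∧ Relation.ReflTransGen (EStep A) c1 c'}
  start := {c | Relation.ReflTransGen (EStep A) (init A) c}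
  accept := {c | c.1 ∈ A.F ∧ (c.2.1 : M) = 1 ∧ (c.2.2 : List X) = []}

inductive Reach (A : ValenceAutomaton X M) : List X → Conf A → Prop
  | nil {c} : Relation.ReflTransGen (EStep A) (init A) c → Reach A [] c
  | snoc {w a c1 c2 c} : Reach A w c1 → AStep A a c1 c2 →
      Relation.ReflTransGen (EStep A) c2 c → Reach A (w ++ [a]) c

lemma reach_estar {A : ValenceAutomaton X M} {w c c'}
    (h : Reach A w c) (h' : Relation.ReflTransGen (EStep A) c c') : Reach A w c' := by
  cases h with
  | nil h0 => exact Reach.nil (h0.trans h')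
  | snoc r ha he => exact Reach.snoc r ha (he.trans h')

lemma reach_to_eval {A : ValenceAutomaton X M} {w c} (h : Reach A w c) :
    c ∈ (nfa A).eval w := by
  induction h with
  | nil h0 => exact h0
  | snoc r ha he ih =>
    rw [NFA.eval_append_singleton, NFA.mem_stepSet]
    exact ⟨_, ih, _, ha, he⟩

lemma eval_to_reach {A : ValenceAutomaton X M} {w : List X} :
    ∀ c ∈ (nfa A).eval w, Reach A w c := by
  induction w using List.reverseRecOn with
  | nil => intro c hc; exact Reach.nil hc
  | append_singleton w a ih =>
    intro c hc
    rw [NFA.eval_append_singleton, NFA.mem_stepSet] at hc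
    obtain ⟨c1, hc1, c2, ha, he⟩ := hc
    exact Reach.snoc (ih c1 hc1) ha he

/-- EStep* preserves the trace invariant. -/
lemma estar_trace {A : ValenceAutomaton X M} {w c c'}
    (h : Relation.ReflTransGen (EStep A) c c')
    (ht : Trace A A.q0 1 (w ++ (c.2.2 : List X)) c.1 (c.2.1 : M)) :
    Trace A A.q0 1 (w ++ (c'.2.2 : List X)) c'.1 (c'.2.1 : M) := by
  induction h with
  | refl => exact ht
  | tail h1 h2 ih =>
    obtain ⟨hnil, e, he, h3, h4, h5, h6⟩ := h2
    rw [hnil, List.append_nil] at ih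
    rw [h6, h4, h5]
    exact ih.snoc e he h3

lemma reach_trace {A : ValenceAutomaton X M} {w c} (h : Reach A w c) :
    Trace A A.q0 1 (w ++ (c.2.2 : List X)) c.1 (c.2.1 : M) := by
  induction h with
  | nil h0 =>
    refine estar_trace h0 ?_
    simpa [init] using Trace.refl (A := A) A.q0 1
  | snoc r ha he ih =>
    rename_i w' a c1 c2 c
    obtain ⟨h1, h2, h3⟩ := ha
    refine estar_trace he ?_
    rw [h1, h2]
    rw [h3] at ih
    simpa [List.append_assoc] using ih

/-- consume the pending suffix letter by letter. -/
lemma consume {A : ValenceAutomaton X M} {r : Fin A.n} {mv : ↥(Eset A)} :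
    ∀ (s : List X) (hs : s ∈ SufSet A) (w : List X),
      Reach A w (r, mv, ⟨s, hs⟩) → Reach A (w ++ s) (r, mv, ⟨[], nil_mem_SufSet A⟩) := by
  intro s
  induction s with
  | nil => intro hs w h; simpa using h
  | cons a s ih =>
    intro hs w h
    have hs' : s ∈ SufSet A := tail_mem_SufSet hs
    have step : Reach A (w ++ [a]) (r, mv, ⟨s, hs'⟩) :=
      Reach.snoc (c2 := (r, mv, ⟨s, hs'⟩)) h ⟨rfl, rfl, rfl⟩ Relation.ReflTransGen.refl
    have := ih hs' (w ++ [a]) step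
    simpa [List.append_assoc] using this

lemma trace_reach {A : ValenceAutomaton X M} {p m u q mf}
    (h : Trace A p m u q mf) (hmf : mf = 1) :
    ∀ (w : List X) (c : Conf A), Reach A w c → c.1 = p → (c.2.1 : M) = m →
      (c.2.2 : List X) = [] →
      Reach A (w ++ u) (q, ⟨1, one_mem_Eset A⟩, ⟨[], nil_mem_SufSet A⟩) := by
  induction h with
  | refl p m =>
    intro w c hr h1 h2 h3
    obtain ⟨q', mv, sv⟩ := c
    simp only at h1 h2 h3
    subst hmf
    have hmv : mv = ⟨1, one_mem_Eset A⟩ := Subtype.ext (by rw [h2])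
    have hsv : sv = ⟨[], nil_mem_SufSet A⟩ := Subtype.ext (by rw [h3])
    rw [List.append_nil, ← h1, ← hmv, ← hsv]
    exact hr
  | head e he hp h ih =>
    rename_i p' m' w' q' mf' 
    intro w c hr h1 h2 h3
    -- m' * e.2.1.2 ∈ Eset A
    have hmN : (c.2.1 : M) ∈ Submonoid.closure ((S A : Set M)) := (c.2.1).2.1
    have hmeN : m' * e.2.1.2 ∈ Submonoid.closure ((S A : Set M)) := by
      rw [← h2]; exact mul_mem hmN (label_mem_closure he)
    obtain ⟨cinv, hcinv, hprod⟩ := trace_inv h hmf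
    have hmeE : m' * e.2.1.2 ∈ Eset A :=
      ⟨hmeN, 1, one_mem _, cinv, hcinv, by simpa using hprod⟩
    set c' : Conf A := (e.2.2, ⟨m' * e.2.1.2, hmeE⟩, ⟨e.2.1.1, word_mem_SufSet he⟩) with hc'
    have hest : EStep A c c' := ⟨h3, e, he, by rw [h1, hp], rfl, by simp [hc', h2], rfl⟩
    have hr' : Reach A w c' := reach_estar hr (Relation.ReflTransGen.single hest)
    have hr'' : Reach A (w ++ e.2.1.1) (e.2.2, ⟨m' * e.2.1.2, hmeE⟩, ⟨[], nil_mem_SufSet A⟩) :=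
      consume e.2.1.1 (word_mem_SufSet he) w hr'
    have := ih hmf (w ++ e.2.1.1) _ hr'' rfl rfl rfl
    simpa [List.append_assoc] using this

lemma nfa_accepts (A : ValenceAutomaton X M) : (nfa A).accepts = A.accepts := by
  ext w
  rw [NFA.mem_accepts]
  constructor
  · rintro ⟨c, ⟨hF, hm1, hs⟩, hc⟩
    have := reach_trace (eval_to_reach c hc)
    rw [hs, hm1, List.append_nil] at this
    exact accepts_iff_trace.mpr ⟨c.1, hF, this⟩
  · intro hw
    obtain ⟨q, hq, ht⟩ := accepts_iff_trace.mp hw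
    have := trace_reach ht rfl [] (init A) (Reach.nil Relation.ReflTransGen.refl) rfl rfl rfl
    simp only [List.nil_append] at this
    exact ⟨_, ⟨hq, rfl, rfl⟩, reach_to_eval this⟩

end ValenceProof

/-- If `E(N) = {a ∈ N | ∃ b c ∈ N, b*a*c = 1}` is finite for every finitely
generated submonoid `N` of `M`, then every language accepted by a valence
automaton over `M` is regular. -/
theorem stmt_19 {M : Type} [Monoid M]
    (hE : ∀ S : Finset M,
      {a : M | a ∈ Submonoid.closure (S : Set M) ∧
        ∃ b ∈ Submonoid.closure (S : Set M),
        ∃ c ∈ Submonoid.closure (S : Set M), b * a * c = 1}.Finite)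
    (X : Type) (A : ValenceAutomaton X M) :
    A.accepts.IsRegular := by
  classical
  haveI : Fintype (↥(ValenceProof.Eset A)) := (hE (ValenceProof.S A)).fintype
  haveI : Fintype (↥(ValenceProof.SufSet A)) := (ValenceProof.sufSet_finite A).fintype
  haveI : Fintype (ValenceProof.Conf A) := by
    unfold ValenceProof.Conf; infer_instance
  exact ⟨Set (ValenceProof.Conf A), inferInstance, (ValenceProof.nfa A).toDFA,
    by rw [NFA.toDFA_correct]; exact ValenceProof.nfa_accepts A⟩
end
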